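/- arXiv:cs/0609022 — 2 statements merged into one kernel-verified Lean document; each statement's English description precedes it below -/
import Mathlib

section
/- For finite relational structures A and B over the same signature, A and B are homomorphically equivalent (there exist homomorphisms A → B and B → A) if and only if A and B have isomorphic cores, where a core of a structure is a minimal-size retract. -/
/-!
A retraction `A → S` and the inclusion `S → A` make every structure homomorphically equivalent to
each of its retracts, which gives the backward direction. For the forward one, every endomorphism
`e` of a core `S` is injective: some iterate of `e` is idempotent, so its image is a retract of `A`
no larger than the image of `e`, and minimality of `S` forces `e` to be onto. Hence the
homomorphisms between cores `S` and `T` of homomorphically equivalent `A` and `B` are bijections,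
and the one from `S` to `T` reflects relations because an injective endomorphism of a finite
structure permutes the finite set of related tuples.
-/

/-- A finite relational structure over the signature with relation symbols `ι`
and arities `ar`. -/
structure Str (ι : Type) (ar : ι → ℕ) where
  carrier : Type
  rel : ∀ i, (Fin (ar i) → carrier) → Prop

variable {ι : Type} {ar : ι → ℕ}

/-- `h` is a homomorphism from `A` to `B`. -/
def IsHom (A B : Str ι ar) (h : A.carrier → B.carrier) : Prop :=
  ∀ i t, A.rel i t → B.rel i (h ∘ t)

/-- The induced substructure of `A` on a subset `S`. -/
def induced (A : Str ι ar) (S : Set A.carrier) : Str ι ar :=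
  ⟨S, fun i t => A.rel i (fun j => (t j : A.carrier))⟩

/-- `S` is a retract of `A`: there is a homomorphism `A → A` with range in `S`
fixing `S` pointwise. -/
def IsRetract (A : Str ι ar) (S : Set A.carrier) : Prop :=
  ∃ r : A.carrier → A.carrier, IsHom A A r ∧ (∀ x, r x ∈ S) ∧ (∀ x ∈ S, r x = x)

/-- `S` is a core of `A`: a retract of minimal cardinality. -/
def IsCore (A : Str ι ar) (S : Set A.carrier) : Prop :=
  IsRetract A S ∧ ∀ T : Set A.carrier, IsRetract A T → Nat.card S ≤ Nat.card T

/-- Isomorphism of structures. -/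
def Isomorphic (A B : Str ι ar) : Prop :=
  ∃ g : A.carrier ≃ B.carrier, ∀ i t, A.rel i t ↔ B.rel i (g ∘ t)

theorem exists_pow_isIdempotentElem {M : Type*} [Monoid M] [Finite M] (x : M) :
    ∃ n ≠ 0, IsIdempotentElem (x ^ n) := by
  obtain ⟨a, b, hne, hab⟩ := Finite.exists_ne_map_eq_of_infinite (x ^ · : ℕ → M)
  wlog hlt : a < b generalizing a b
  · exact this b a hne.symm hab.symm (hne.lt_or_gt.resolve_left hlt)
  obtain ⟨p, rfl⟩ := Nat.exists_eq_add_of_lt hlt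
  have hperiodic : ∀ k, x ^ (a + k * (p + 1)) = x ^ a := by
    intro k
    induction k with
    | zero => simp
    | succ k ih => rw [add_mul, one_mul, ← add_assoc, pow_add, ih, ← pow_add]; exact hab.symm
  refine ⟨(a + 1) * (p + 1), by positivity, ?_⟩
  calc x ^ ((a + 1) * (p + 1)) * x ^ ((a + 1) * (p + 1))
      = x ^ (a + (a + 1) * (p + 1)) * x ^ (a * p + p + 1) := by rw [← pow_add, ← pow_add]; ring_nf
    _ = x ^ ((a + 1) * (p + 1)) := by rw [hperiodic, ← pow_add]; ring_nf

theorem IsHom.id (A : Str ι ar) : IsHom A A id := fun _ _ h => h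

theorem IsHom.comp {A B C : Str ι ar} {f : A.carrier → B.carrier} {g : B.carrier → C.carrier}
    (hg : IsHom B C g) (hf : IsHom A B f) : IsHom A C (g ∘ f) :=
  fun i t h => hg i (f ∘ t) (hf i t h)

theorem IsHom.iterate {A : Str ι ar} {f : A.carrier → A.carrier} (hf : IsHom A A f) (n : ℕ) :
    IsHom A A f^[n] := by
  induction n with
  | zero => exact IsHom.id A
  | succ n ih => exact Function.iterate_succ' f n ▸ hf.comp ih

theorem IsHom.rel_comp_iff_of_injective {A : Str ι ar} [Finite A.carrier]
    {e : A.carrier → A.carrier} (he : IsHom A A e) (he_inj : Function.Injective e) (i : ι)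
    (t : Fin (ar i) → A.carrier) :
    A.rel i (e ∘ t) ↔ A.rel i t := by
  refine ⟨fun h => ?_, he i t⟩
  let E : {t // A.rel i t} → {t // A.rel i t} := fun t => ⟨e ∘ t.1, he i _ t.2⟩
  have hE : Function.Injective E := fun t t' htt' =>
    Subtype.ext (he_inj.comp_left (congrArg Subtype.val htt'))
  obtain ⟨⟨t', ht'⟩, hEt'⟩ := Finite.surjective_of_injective hE ⟨e ∘ t, h⟩
  rwa [← he_inj.comp_left (congrArg Subtype.val hEt')]

def HasHom (A B : Str ι ar) : Prop := ∃ h, IsHom A B h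

theorem HasHom.trans {A B C : Str ι ar} (hAB : HasHom A B) (hBC : HasHom B C) : HasHom A C :=
  let ⟨_, hf⟩ := hAB
  let ⟨_, hg⟩ := hBC
  ⟨_, hg.comp hf⟩

theorem Isomorphic.hasHom {A B : Str ι ar} (h : Isomorphic A B) : HasHom A B :=
  let ⟨g, hg⟩ := h
  ⟨g, fun i t => (hg i t).1⟩

theorem Isomorphic.symm {A B : Str ι ar} (h : Isomorphic A B) : Isomorphic B A := by
  obtain ⟨g, hg⟩ := h
  refine ⟨g.symm, fun i t => ?_⟩
  rw [hg i, ← Function.comp_assoc, g.self_comp_symm, Function.id_comp]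

theorem isomorphic_of_hasHom {A B : Str ι ar} [Finite A.carrier] [Finite B.carrier]
    (hA : ∀ e, IsHom A A e → Function.Injective e) (hB : ∀ e, IsHom B B e → Function.Injective e)
    (hAB : HasHom A B) (hBA : HasHom B A) : Isomorphic A B := by
  obtain ⟨f, hf⟩ := hAB
  obtain ⟨g, hg⟩ := hBA
  have hgf := hA _ (hg.comp hf)
  have hf_bij : Function.Bijective f :=
    hgf.of_comp.bijective_of_nat_card_le
      (Nat.card_le_card_of_injective g (hB _ (hf.comp hg)).of_comp)
  refine ⟨Equiv.ofBijective f hf_bij, fun i t => ⟨hf i t, fun h => ?_⟩⟩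
  exact ((hg.comp hf).rel_comp_iff_of_injective hgf i t).1 (hg i _ h)

instance (A : Str ι ar) [Finite A.carrier] (S : Set A.carrier) : Finite (induced A S).carrier :=
  Subtype.finite

theorem isHom_val (A : Str ι ar) (S : Set A.carrier) : IsHom (induced A S) A Subtype.val :=
  fun _ _ h => h

theorem induced_hasHom (A : Str ι ar) (S : Set A.carrier) : HasHom (induced A S) A :=
  ⟨Subtype.val, isHom_val A S⟩

theorem isRetract_univ (A : Str ι ar) : IsRetract A Set.univ :=
  ⟨id, IsHom.id A, fun _ => trivial, fun _ _ => rfl⟩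

theorem isRetract_range_of_idempotent {A : Str ι ar} {p : A.carrier → A.carrier} (hp : IsHom A A p)
    (hpp : ∀ x, p (p x) = p x) : IsRetract A (Set.range p) :=
  ⟨p, hp, Set.mem_range_self, by rintro _ ⟨x, rfl⟩; exact hpp x⟩

theorem exists_isRetract_subset_range {A : Str ι ar} [Finite A.carrier] {q : A.carrier → A.carrier}
    (hq : IsHom A A q) : ∃ R, IsRetract A R ∧ R ⊆ Set.range q := by
  have : Finite (Function.End A.carrier) := Pi.finite
  obtain ⟨n, hn, hidem⟩ := exists_pow_isIdempotentElem (M := Function.End A.carrier) q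
  obtain ⟨m, rfl⟩ := Nat.exists_eq_succ_of_ne_zero hn
  refine ⟨_, isRetract_range_of_idempotent (hq.iterate (m + 1)) (congrFun hidem), ?_⟩
  rw [Function.iterate_succ']
  exact Set.range_comp_subset_range _ _

theorem IsRetract.exists_retraction {A : Str ι ar} {S : Set A.carrier} (hS : IsRetract A S) :
    ∃ ρ : A.carrier → S, IsHom A (induced A S) ρ ∧ ∀ s : S, ρ s = s :=
  let ⟨r, hr, hrS, hr_fix⟩ := hS
  ⟨fun x => ⟨r x, hrS x⟩, hr, fun s => Subtype.ext (hr_fix s s.2)⟩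

theorem IsRetract.hasHom_induced {A : Str ι ar} {S : Set A.carrier} (hS : IsRetract A S) :
    HasHom A (induced A S) :=
  let ⟨ρ, hρ, _⟩ := hS.exists_retraction
  ⟨ρ, hρ⟩

theorem exists_isCore (A : Str ι ar) : ∃ S, IsCore A S := by
  obtain ⟨S, hS, hmin⟩ := (measure fun S : Set A.carrier => Nat.card S).wf.has_min
    {S | IsRetract A S} ⟨Set.univ, isRetract_univ A⟩
  exact ⟨S, hS, fun T hT => not_lt.1 (hmin T hT)⟩

theorem IsCore.card_le_card_range {A : Str ι ar} [Finite A.carrier] {S : Set A.carrier}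
    (hS : IsCore A S) {q : A.carrier → A.carrier} (hq : IsHom A A q) :
    Nat.card S ≤ Nat.card (Set.range q) :=
  let ⟨R, hR, hRq⟩ := exists_isRetract_subset_range hq
  (hS.2 R hR).trans (Nat.card_mono (Set.toFinite _) hRq)

theorem IsCore.injective_of_isHom {A : Str ι ar} [Finite A.carrier] {S : Set A.carrier}
    (hS : IsCore A S) {e : S → S} (he : IsHom (induced A S) (induced A S) e) :
    Function.Injective e := by
  obtain ⟨ρ, hρ, hρ_fix⟩ := hS.1.exists_retraction
  have hρ_surj : Function.Surjective ρ := fun s => ⟨s, hρ_fix s⟩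
  have hcard : Nat.card S ≤ Nat.card (Set.range e) :=
    calc Nat.card S ≤ Nat.card (Set.range (Subtype.val ∘ e ∘ ρ)) :=
          hS.card_le_card_range ((isHom_val A S).comp (he.comp hρ))
      _ = Nat.card (Set.range e) := by
          rw [Set.range_comp, hρ_surj.range_comp, Nat.card_image_of_injective Subtype.val_injective]
  have h := (Set.rangeFactorization_surjective.bijective_of_nat_card_le hcard).1
  exact fun s s' hss' => h (Subtype.ext hss')

theorem hom_equiv_iff_isomorphic_cores_general (A B : Str ι ar)
    [Finite A.carrier] [Finite B.carrier] :
    ((∃ h, IsHom A B h) ∧ (∃ h, IsHom B A h)) ↔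
      ∃ (S : Set A.carrier) (T : Set B.carrier),
        IsCore A S ∧ IsCore B T ∧ Isomorphic (induced A S) (induced B T) := by
  constructor
  · rintro ⟨hAB, hBA⟩
    obtain ⟨S, hS⟩ := exists_isCore A
    obtain ⟨T, hT⟩ := exists_isCore B
    refine ⟨S, T, hS, hT, isomorphic_of_hasHom (fun _ => hS.injective_of_isHom)
      (fun _ => hT.injective_of_isHom) ?_ ?_⟩
    · exact (induced_hasHom A S).trans (HasHom.trans hAB hT.1.hasHom_induced)
    · exact (induced_hasHom B T).trans (HasHom.trans hBA hS.1.hasHom_induced)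
  · rintro ⟨S, T, hS, hT, hST⟩
    exact ⟨hS.1.hasHom_induced.trans (hST.hasHom.trans (induced_hasHom B T)),
      hT.1.hasHom_induced.trans (hST.symm.hasHom.trans (induced_hasHom A S))⟩

/-- Finite structures are homomorphically equivalent iff they have isomorphic cores. -/
theorem hom_equiv_iff_isomorphic_cores (A B : Str ι ar)
    [Finite A.carrier] [Finite B.carrier] [Nonempty A.carrier] [Nonempty B.carrier] :
    ((∃ h, IsHom A B h) ∧ (∃ h, IsHom B A h)) ↔
      ∃ (S : Set A.carrier) (T : Set B.carrier),
        IsCore A S ∧ IsCore B T ∧ Isomorphic (induced A S) (induced B T) :=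
  hom_equiv_iff_isomorphic_cores_general A B
end

section
/- Let R be a k-ary relation on a finite set A with k ≥ 2, such that R is nonempty and is not x-valid for any x ∈ A (i.e., (x,x,...,x) ∉ R for all x). Then there exist k' ≥ 2 and a surjection p from coordinates {1,...,k} onto {1,...,k'} such that the induced relation R'(y_1,...,y_{k'}) = { (y_1,...,y_{k'}) : (y_{p(1)},...,y_{p(k)}) ∈ R } is nonempty and every tuple in R' consists of pairwise distinct elements. -/
lemma collapse_step {A : Type} {m : ℕ} (t : Fin (m+1) → A) (i j : Fin (m+1))
    (hij : i ≠ j) (ht : t i = t j) :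
    ∃ q : Fin (m+1) → Fin m, Function.Surjective q ∧ t = (t ∘ j.succAbove) ∘ q := by
  have hex : ∀ x : Fin (m+1), x ≠ j → ∃ y, j.succAbove y = x := fun x hx =>
    Fin.exists_succAbove_eq hx
  choose f hf using hex
  refine ⟨fun x => if h : x = j then f i hij else f x h, ?_, ?_⟩
  · intro y
    refine ⟨j.succAbove y, ?_⟩
    have h1 : j.succAbove y ≠ j := Fin.succAbove_ne j y
    simp only [dif_neg h1]
    exact Fin.succAbove_right_injective (hf _ h1)
  · funext x
    by_cases h : x = j
    · subst h; simp [Function.comp, hf i hij, ← ht]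
    · simp [Function.comp, h, hf x h]

/-- Collapsing repeated coordinates: if a nonempty `k`-ary relation (`k ≥ 2`) on a
finite set is not `x`-valid for any `x`, then some surjective identification of
coordinates `p : Fin k → Fin k'` with `k' ≥ 2` yields a relation
`R'(y_1,...,y_{k'}) := R(y_{p(1)},...,y_{p(k)})` that is nonempty and antireflexive. -/
theorem collapse_to_antireflexive (A : Type) [Finite A] (k : ℕ) (hk : 2 ≤ k)
    (R : (Fin k → A) → Prop) (hne : ∃ t, R t) (hnv : ∀ x : A, ¬ R (fun _ => x)) :
    ∃ (k' : ℕ), 2 ≤ k' ∧ k' ≤ k ∧ ∃ p : Fin k → Fin k', Function.Surjective p ∧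
      (∃ t : Fin k' → A, R (t ∘ p)) ∧
      (∀ t : Fin k' → A, R (t ∘ p) → Function.Injective t) := by
  classical
  set P : ℕ → Prop := fun n =>
    ∃ p : Fin k → Fin n, Function.Surjective p ∧ ∃ t : Fin n → A, R (t ∘ p) with hP
  have hPk : P k := by
    obtain ⟨t, ht⟩ := hne
    exact ⟨id, Function.surjective_id, t, ht⟩
  have hex : ∃ n, P n := ⟨k, hPk⟩
  obtain ⟨n, hPn, hmin⟩ : ∃ n, P n ∧ ∀ m < n, ¬ P m :=
    ⟨Nat.find hex, Nat.find_spec hex, fun m hm => Nat.find_min hex hm⟩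
  obtain ⟨p, hsurj, t, hRt⟩ := hPn
  have hnk : n ≤ k := le_of_not_gt fun h => hmin k h hPk
  have hn2 : 2 ≤ n := by
    by_contra h
    push_neg at h
    interval_cases n
    · exact (p ⟨0, by omega⟩).elim0
    · apply hnv (t 0)
      have : t ∘ p = fun _ => t 0 := by
        funext x
        simp [Function.comp, Subsingleton.elim (p x) 0]
      rwa [this] at hRt
  refine ⟨n, hn2, hnk, p, hsurj, ⟨t, hRt⟩, ?_⟩
  intro t' hRt'
  by_contra hninj
  obtain ⟨i, j, hij, hne'⟩ := Function.not_injective_iff.mp hninj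
  obtain ⟨m, rfl⟩ : ∃ m, n = m + 1 := ⟨n - 1, by omega⟩
  obtain ⟨q, hqsurj, hteq⟩ := collapse_step t' i j hne' hij
  have hPm : P m := by
    refine ⟨q ∘ p, hqsurj.comp hsurj, t' ∘ j.succAbove, ?_⟩
    have : (t' ∘ j.succAbove) ∘ q ∘ p = t' ∘ p := by
      rw [← Function.comp_assoc, ← hteq]
    rwa [this]
  exact hmin m (by omega) hPm
end
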